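/- Let ξ ∈ ℝ³ with ξ ≠ 0 and let v ∈ ℂ³ satisfy ξ₁v₁ + ξ₂v₂ + ξ₃v₃ = 0 (unconjugated dot product, with ξ regarded as a vector in ℂ³). Define w = v + (i/‖ξ‖) (ξ × v), where × is the cross product on ℂ³ and ‖ξ‖ is the Euclidean norm of ξ. Then ξ₁w₁ + ξ₂w₂ + ξ₃w₃ = 0 and i (ξ × w) = ‖ξ‖ w. -/

import Mathlib

/-!
Since `ξ ⬝ (ξ × v) = 0`, the first claim is `ξ ⬝ v = 0`. For the second, the expansion
`ξ × (ξ × v) = (ξ ⬝ v) ξ - (ξ ⬝ ξ) v = -‖ξ‖² v` gives `ξ × w = ξ × v - i ‖ξ‖ v`,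
and multiplying by `i` returns `‖ξ‖ w`.
-/

open Matrix Complex

theorem dotProduct_add_smul_cross_self {R : Type*} [CommRing R] (a v : Fin 3 → R) (c : R) :
    a ⬝ᵥ (v + c • a ⨯₃ v) = a ⬝ᵥ v := by
  rw [dotProduct_add, dotProduct_smul, dot_self_cross, smul_zero, add_zero]

theorem cross_add_smul_cross_self {R : Type*} [CommRing R] (a v : Fin 3 → R) (c : R)
    (hv : a ⬝ᵥ v = 0) : a ⨯₃ (v + c • a ⨯₃ v) = a ⨯₃ v - (c * (a ⬝ᵥ a)) • v := by
  rw [map_add, map_smul, cross_cross_eq_smul_sub_smul', hv, zero_smul, zero_sub, smul_neg,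
    smul_smul, sub_eq_add_neg]

theorem I_smul_cross_add_I_div_smul_cross_self (a v : Fin 3 → ℂ) {r : ℂ} (hr : r ≠ 0)
    (ha : a ⬝ᵥ a = r ^ 2) (hv : a ⬝ᵥ v = 0) :
    I • a ⨯₃ (v + (I / r) • a ⨯₃ v) = r • (v + (I / r) • a ⨯₃ v) := by
  have hI : I * (I / r * r ^ 2) = -r := by
    field_simp
    rw [I_sq]
  rw [cross_add_smul_cross_self a v _ hv, ha, smul_sub, smul_smul, hI, smul_add, smul_smul,
    mul_div_cancel₀ _ hr]
  module

theorem EuclideanSpace.ofReal_dotProduct_self {n : Type*} [Fintype n]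
    (ξ : EuclideanSpace ℝ n) :
    (fun i => (ξ i : ℂ)) ⬝ᵥ (fun i => (ξ i : ℂ)) = (‖ξ‖ : ℂ) ^ 2 := by
  rw [← ofReal_pow, EuclideanSpace.real_norm_sq_eq]
  push_cast
  simp only [dotProduct, sq]

/-- For `ξ ∈ ℝ³ \ {0}` and `v ∈ ℂ³` with `ξ·v = 0` (unconjugated),
the vector `w = v + (i/‖ξ‖) (ξ × v)` satisfies `ξ·w = 0` and `i(ξ × w) = ‖ξ‖ w`. -/
theorem beltrami_fourier (ξ : EuclideanSpace ℝ (Fin 3)) (hξ : ξ ≠ 0)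
    (v : Fin 3 → ℂ) (hv : ∑ i, (ξ i : ℂ) * v i = 0)
    (w : Fin 3 → ℂ)
    (hw : w = v + (Complex.I / (‖ξ‖ : ℂ)) • crossProduct (fun i => (ξ i : ℂ)) v) :
    (∑ i, (ξ i : ℂ) * w i = 0) ∧
      Complex.I • crossProduct (fun i => (ξ i : ℂ)) w = (‖ξ‖ : ℂ) • w := by
  have hr : (‖ξ‖ : ℂ) ≠ 0 := ofReal_ne_zero.mpr (norm_ne_zero_iff.mpr hξ)
  subst hw
  exact ⟨(dotProduct_add_smul_cross_self _ _ _).trans hv,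
    I_smul_cross_add_I_div_smul_cross_self _ _ hr (EuclideanSpace.ofReal_dotProduct_self ξ) hv⟩
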